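/- Let F be a properly parametrized Markov multi-map with forward trajectory space X (with left-shift map T) and associated SFT Σ_M. If (X,T) is topologically mixing, then Σ_M satisfies the Mixing Condition (MC). -/

import Mathlib

open Set Topology

/-! ### Generic dynamical notions -/

/-- Topological transitivity of a map. -/
def TopTransitive {α : Type*} [TopologicalSpace α] (T : α → α) : Prop :=
  ∀ U V : Set α, IsOpen U → IsOpen V → U.Nonempty → V.Nonempty →
    ∃ n : ℕ, (T^[n] '' U ∩ V).Nonempty

/-- Topological mixing of a map. -/
def TopMixing {α : Type*} [TopologicalSpace α] (T : α → α) : Prop :=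
  ∀ U V : Set α, IsOpen U → IsOpen V → U.Nonempty → V.Nonempty →
    ∃ N : ℕ, ∀ n, N ≤ n → (T^[n] '' U ∩ V).Nonempty

/-- Density of the set of periodic points of a map. -/
def DensePeriodic {α : Type*} [TopologicalSpace α] (T : α → α) : Prop :=
  Dense {x : α | ∃ p : ℕ, 1 ≤ p ∧ T^[p] x = x}

/-- The metric `d(x,y) = sup_k |x_k - y_k|/(k+1)` on sequence spaces. -/
noncomputable def dseq (x y : ℕ → ℝ) : ℝ := ⨆ k : ℕ, |x k - y k| / ((k : ℝ) + 1)

/-- The specification property for a map `T` with respect to a distance function `d`. -/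
def SpecProp {α : Type*} (T : α → α) (d : α → α → ℝ) : Prop :=
  ∀ ε : ℝ, 0 < ε → ∃ N : ℕ, ∀ l : ℕ, ∀ x : Fin (l + 1) → α, ∀ a b : Fin (l + 1) → ℕ,
    (∀ k, 1 ≤ a k) → (∀ k, a k ≤ b k) →
    (∀ k : Fin l, b k.castSucc < a k.succ ∧ b k.castSucc + N ≤ a k.succ) →
    ∀ p : ℕ, b (Fin.last l) + N ≤ p →
      ∃ z : α, T^[p] z = z ∧
        ∀ k : Fin (l + 1), ∀ i : ℕ, a k ≤ i → i ≤ b k → d (T^[i] z) (T^[i] (x k)) < ε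

/-- The length `ℓ` of a (possibly degenerate) interval. -/
noncomputable def intervalLen (I : Set ℝ) : ℝ := sSup I - sInf I

/-! ### Markov multi-maps -/

/-- A Markov multi-map of the interval, given by a tuple
`(P, A₀, A₁, A₂, D, R, {f_a})` as in the paper, together with the derived data
(inverse maps `g`, interiors `D0`, `R0`, graphs `Gr`, `G0`) which are uniquely
determined by the defining equations below. -/
structure MarkovMultiMap where
  A : Type
  finA : Finite A
  A0 : Set A
  A1 : Set A
  A2 : Set A
  P : Finset ℝ
  D : A → Set ℝ
  R : A → Set ℝ
  f : A → ℝ → ℝ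
  g : A → ℝ → ℝ
  D0 : A → Set ℝ
  R0 : A → Set ℝ
  Gr : A → Set (ℝ × ℝ)
  G0 : A → Set (ℝ × ℝ)
  P_zero : (0 : ℝ) ∈ P
  P_one : (1 : ℝ) ∈ P
  P_sub : (P : Set ℝ) ⊆ Set.Icc 0 1
  A_cover : ∀ a : A, a ∈ A0 ∨ a ∈ A1 ∨ a ∈ A2
  A01 : A0 ∩ A1 = ∅
  A02 : A0 ∩ A2 = ∅
  A12 : A1 ∩ A2 = ∅
  D_A0 : ∀ a ∈ A0, ∃ p ∈ P, ∃ q ∈ P, p < q ∧ (∀ r ∈ P, ¬(p < r ∧ r < q)) ∧ D a = Set.Icc p q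
  D_A12 : ∀ a ∈ A1 ∪ A2, ∃ p ∈ P, D a = {p}
  R_A0 : ∀ a ∈ A0, ∃ u ∈ P, ∃ v ∈ P, u < v ∧ R a = Set.Icc u v
  R_A1 : ∀ a ∈ A1, ∃ u ∈ P, ∃ v ∈ P, u < v ∧ R a = Set.Icc u v ∧
    Set.Icc u v ∩ (P : Set ℝ) = {u, v}
  R_A2 : ∀ a ∈ A2, ∃ u ∈ P, R a = {u}
  f_homeo : ∀ a ∈ A0, ContinuousOn (f a) (D a) ∧ Set.BijOn (f a) (D a) (R a)
  g_A0 : ∀ a ∈ A0, (∀ x ∈ D a, g a (f a x) = x) ∧ ∀ y ∈ R a, g a y ∈ D a ∧ f a (g a y) = y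
  g_A12 : ∀ a ∈ A1 ∪ A2, ∀ y ∈ R a, g a y ∈ D a
  cover : Set.Icc (0 : ℝ) 1 = ⋃ a : A, D a
  D0_A0 : ∀ a ∈ A0, D0 a = interior (D a)
  D0_A12 : ∀ a ∈ A1 ∪ A2, D0 a = D a
  R0_A01 : ∀ a ∈ A0 ∪ A1, R0 a = interior (R a)
  R0_A2 : ∀ a ∈ A2, R0 a = R a
  Gr_A0 : ∀ a ∈ A0, Gr a = {q : ℝ × ℝ | q.1 ∈ D a ∧ q.2 = f a q.1}
  Gr_A12 : ∀ a ∈ A1 ∪ A2, Gr a = (D a) ×ˢ (R a)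
  G0_A0 : ∀ a ∈ A0, G0 a = {q : ℝ × ℝ | q.1 ∈ D0 a ∧ q.2 = f a q.1}
  G0_A1 : ∀ a ∈ A1, G0 a = (D a) ×ˢ (R0 a)
  G0_A2 : ∀ a ∈ A2, G0 a = Gr a

namespace MarkovMultiMap

variable (M : MarkovMultiMap)

/-- The graph `G(F)` of the multi-map. -/
def GF : Set (ℝ × ℝ) := ⋃ a : M.A, M.Gr a

/-- `F` is properly parametrized: the sets `G₀(a)` partition `G(F)`. -/
def ProperlyParametrized : Prop :=
  (⋃ a : M.A, M.G0 a) = M.GF ∧ ∀ a b : M.A, a ≠ b → Disjoint (M.G0 a) (M.G0 b)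

/-- The forward trajectory space `X`. -/
def X : Set (ℕ → ℝ) :=
  {x | (∀ k, x k ∈ Set.Icc (0 : ℝ) 1) ∧ ∀ k, (x k, x (k + 1)) ∈ M.GF}

/-- The left-shift map `T` on the forward trajectory space. -/
def shift : M.X → M.X :=
  fun x => ⟨fun k => x.1 (k + 1), ⟨fun k => x.2.1 (k + 1), fun k => x.2.2 (k + 1)⟩⟩

/-- The inverse trajectory (inverse limit) space `Y`, encoded by `y k = y_{-k}`. -/
def Y : Set (ℕ → ℝ) :=
  {y | (∀ k, y k ∈ Set.Icc (0 : ℝ) 1) ∧ ∀ k, (y (k + 1), y k) ∈ M.GF}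

/-- The right-shift map `S` on the inverse limit space (in the encoding `y k = y_{-k}`). -/
def ishift : M.Y → M.Y :=
  fun y => ⟨fun k => y.1 (k + 1), ⟨fun k => y.2.1 (k + 1), fun k => y.2.2 (k + 1)⟩⟩

/-- The space `X_n` of finite trajectories of length `n`. -/
def finTraj (n : ℕ) : Set (Fin n → ℝ) :=
  {x | (∀ i, x i ∈ Set.Icc (0 : ℝ) 1) ∧
    ∀ i : Fin n, ∀ h : (i : ℕ) + 1 < n, (x i, x ⟨(i : ℕ) + 1, h⟩) ∈ M.GF}

/-- The associated nearest-neighbor SFT `Σ_M`. -/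
def SFT : Set (ℕ → M.A) := {a | ∀ n : ℕ, M.D0 (a (n + 1)) ⊆ M.R0 (a n)}

/-- The word `u` (of length `n`) occurs in some point of `Z`. -/
def WordIn {n : ℕ} (u : Fin n → M.A) (Z : Set (ℕ → M.A)) : Prop :=
  ∃ z ∈ Z, ∃ m : ℕ, ∀ i : Fin n, u i = z (m + (i : ℕ))

/-- `L_n`, the words of length `n` in the language of `Σ_M`. -/
def Lang (n : ℕ) : Set (Fin n → M.A) := {u | M.WordIn u M.SFT}

/-- `(x,u)` is a labeled finite trajectory: `(x_k, x_{k+1}) ∈ G(u_k)` for all `k`. -/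
def Labeled {n : ℕ} (x : Fin (n + 1) → ℝ) (u : Fin n → M.A) : Prop :=
  ∀ i : Fin n, (x i.castSucc, x i.succ) ∈ M.Gr (u i)

/-- `(x,u)` is a special labeled finite trajectory: `(x_k, x_{k+1}) ∈ G₀(u_k)` for all `k`. -/
def SpecialLabeled {n : ℕ} (x : Fin (n + 1) → ℝ) (u : Fin n → M.A) : Prop :=
  ∀ i : Fin n, (x i.castSucc, x i.succ) ∈ M.G0 (u i)

/-- A word `u ∈ L_n` is essential if the set of finite trajectories specially labeled
by `u` is open in `X_{n+1}`. -/
def EssentialWord {n : ℕ} (u : Fin n → M.A) : Prop :=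
  u ∈ M.Lang n ∧ IsOpen {x : M.finTraj (n + 1) | M.SpecialLabeled x.1 u}

/-- A symbol is essential if it appears in some essential word. -/
def EssentialSymbol (a : M.A) : Prop :=
  ∃ n : ℕ, ∃ u : Fin n → M.A, M.EssentialWord u ∧ ∃ i : Fin n, u i = a

/-- `A^(e)`, the set of essential symbols. -/
def Ess : Set M.A := {a | M.EssentialSymbol a}

/-- `E`, the set of essential symbolic sequences. -/
def E : Set (ℕ → M.A) := {z ∈ M.SFT | ∀ i : ℕ, z i ∈ M.Ess}

/-- A word all of whose letters lie in `C`, in the language of `Σ_M`. -/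
def WordOver {n : ℕ} (u : Fin n → M.A) (C : Set M.A) : Prop :=
  u ∈ M.Lang n ∧ ∀ i, u i ∈ C

/-- There is a word of length `n+1` over `C` beginning with `a` and ending with `b`. -/
def WordFromTo (C : Set M.A) (a b : M.A) (n : ℕ) : Prop :=
  ∃ u : Fin (n + 1) → M.A, M.WordOver u C ∧ u 0 = a ∧ u (Fin.last n) = b

/-- `C ⊆ A` is irreducible. -/
def IrreducibleSet (C : Set M.A) : Prop :=
  ∀ a ∈ C, ∀ b ∈ C, ∃ n : ℕ, M.WordFromTo C a b n

/-- `C` is an irreducible component (a maximal irreducible subset of `A`). -/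
def IrreducibleComponent (C : Set M.A) : Prop :=
  M.IrreducibleSet C ∧ ∀ C' : Set M.A, M.IrreducibleSet C' → C ⊆ C' → C' = C

/-- `C ⊆ A` is mixing. -/
def MixingSet (C : Set M.A) : Prop :=
  ∃ N : ℕ, 1 ≤ N ∧ ∀ a ∈ C, ∀ b ∈ C, ∀ n : ℕ, N ≤ n + 1 → M.WordFromTo C a b n

/-- `C` is a mixing component (a maximal mixing subset of `A`). -/
def MixingComponent (C : Set M.A) : Prop :=
  M.MixingSet C ∧ ∀ C' : Set M.A, M.MixingSet C' → C ⊆ C' → C' = C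

/-- The Irreducibility Condition (IC). -/
def IC : Prop := ∃ C : Set M.A, M.IrreducibleComponent C ∧ M.Ess ⊆ C

/-- The Mixing Condition (MC). -/
def MC : Prop := ∃ C : Set M.A, M.MixingComponent C ∧ M.Ess ⊆ C

/-- `Z` is a subshift of `Σ_M`: shift-invariant and closed in the product of discrete
topologies (closedness phrased combinatorially). -/
def IsSubshift (Z : Set (ℕ → M.A)) : Prop :=
  Z ⊆ M.SFT ∧ (∀ z ∈ Z, (fun k => z (k + 1)) ∈ Z) ∧
  ∀ x : ℕ → M.A, (∀ n : ℕ, ∃ z ∈ Z, ∀ i, i < n → z i = x i) → x ∈ Z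

/-- The symbol `a` occurs in some point of `Z`. -/
def SymbolInShift (Z : Set (ℕ → M.A)) (a : M.A) : Prop := ∃ z ∈ Z, ∃ k : ℕ, z k = a

/-- `Z` is transitive on symbols. -/
def TransitiveOnSymbols (Z : Set (ℕ → M.A)) : Prop :=
  ∀ a b : M.A, M.SymbolInShift Z a → M.SymbolInShift Z b →
    ∃ z ∈ Z, ∃ m n : ℕ, z m = a ∧ z (m + n) = b

end MarkovMultiMap

/-- The composition `g_{u₀} ∘ ⋯ ∘ g_{u_n}` of inverse maps along a list of symbols. -/
def gWordList (M : MarkovMultiMap) : List M.A → ℝ → ℝ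
  | [], x => x
  | a :: l, x => M.g a (gWordList M l x)

namespace MarkovMultiMap

/-- The inverse map `g_u` associated to a word `u = u₀⋯u_n`. -/
def gWord (M : MarkovMultiMap) {n : ℕ} (u : Fin (n + 1) → M.A) : ℝ → ℝ :=
  gWordList M (List.ofFn u)

/-- The interval `I_u = g_u(R(u_n))`. -/
def Iword (M : MarkovMultiMap) {n : ℕ} (u : Fin (n + 1) → M.A) : Set ℝ :=
  M.gWord u '' M.R (u (Fin.last n))

/-- The Coding Condition (CC). -/
def CC (M : MarkovMultiMap) : Prop :=
  ∃ Z : Set (ℕ → M.A), M.IsSubshift Z ∧ M.TransitiveOnSymbols Z ∧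
    (∀ y ∈ Set.Icc (0 : ℝ) 1, ∃ a ∈ Z, ∃ x ∈ M.X, x 0 = y ∧
      ∀ i : ℕ, (x i, x (i + 1)) ∈ M.Gr (a i)) ∧
    (∀ ε : ℝ, 0 < ε → ∃ N : ℕ, ∀ n : ℕ, N ≤ n → ∀ u : Fin (n + 1) → M.A,
      M.WordIn u Z → intervalLen (M.Iword u) < ε)

/-- Uniform equicontinuity of the family `{g_u : u ∈ L(C)}`. -/
def UnifEquicontOn (M : MarkovMultiMap) (C : Set M.A) : Prop :=
  ∀ ε : ℝ, 0 < ε → ∃ δ : ℝ, 0 < δ ∧ ∀ n : ℕ, ∀ u : Fin (n + 1) → M.A, M.WordOver u C →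
    ∀ x ∈ M.R (u (Fin.last n)), ∀ y ∈ M.R (u (Fin.last n)),
      |x - y| < δ → |M.gWord u x - M.gWord u y| < ε

end MarkovMultiMap

/-!
Label each transition `(x_k, x_{k+1})` of a trajectory by the unique `a` with
`(x_k, x_{k+1}) ∈ G₀(a)`; these labels form a point of `Σ_M`. The finitely many sets `G₀(a)` are
locally closed, so a Baire argument for finite covers shows that every nonempty open set of
trajectories has a nonempty open subset on which any finitely many labels are constant. Call a
symbol stable if it is the constant label at some fixed time on a nonempty open set. An essential
word labels a nonempty open set of trajectories, so essential symbols are stable. Topological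
mixing of `X`, applied to two such open sets, yields words of every large length between two
stable symbols whose letters are all stable. Hence the stable symbols form a mixing set, and a
maximal mixing set containing them contains `A^(e)`.
-/

open Filter

theorem IsOpen.exists_open_subset_of_subset_biUnion_isClosed {X ι : Type*}
    [TopologicalSpace X] (t : Finset ι) {F : ι → Set X} (hF : ∀ i ∈ t, IsClosed (F i))
    {O : Set X} (hO : IsOpen O) (hne : O.Nonempty) (hcov : O ⊆ ⋃ i ∈ t, F i) :
    ∃ i ∈ t, ∃ V, IsOpen V ∧ V.Nonempty ∧ V ⊆ O ∩ F i := by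
  classical
  induction t using Finset.induction_on generalizing O with
  | empty => simpa using hcov hne.some_mem
  | insert a t _ ih =>
    by_cases hout : (O \ F a).Nonempty
    · have hcov' : O \ F a ⊆ ⋃ i ∈ t, F i := fun x hx => by
        simpa [hx.2] using hcov hx.1
      obtain ⟨i, hi, V, hV, hVne, hVO⟩ :=
        ih (fun i hi => hF i (Finset.mem_insert_of_mem hi))
          (hO.sdiff (hF a (Finset.mem_insert_self a t))) hout hcov'
      exact ⟨i, Finset.mem_insert_of_mem hi, V, hV, hVne,
        hVO.trans (inter_subset_inter_left _ sdiff_subset)⟩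
    · exact ⟨a, Finset.mem_insert_self a t, O, hO, hne,
        subset_inter subset_rfl (sdiff_eq_empty.1 (not_nonempty_iff_eq_empty.1 hout))⟩

/-- Apply the finite closed case to the closures `closure (L i)`, then cut the open set found
back by the open part of `L i`. -/
theorem IsOpen.exists_open_subset_of_subset_iUnion_isLocallyClosed {X ι : Type*}
    [TopologicalSpace X] [Finite ι] {L : ι → Set X} (hL : ∀ i, IsLocallyClosed (L i))
    {O : Set X} (hO : IsOpen O) (hne : O.Nonempty) (hcov : O ⊆ ⋃ i, L i) :
    ∃ i, ∃ V, IsOpen V ∧ V.Nonempty ∧ V ⊆ O ∩ L i := by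
  have := Fintype.ofFinite ι
  obtain ⟨i, -, V, hV, hVne, hVO⟩ := hO.exists_open_subset_of_subset_biUnion_isClosed
    Finset.univ (F := fun i => closure (L i)) (fun i _ => isClosed_closure) hne
    (fun x hx => by simpa using mem_iUnion.1 (hcov hx) |>.imp fun i h => subset_closure h)
  obtain ⟨U, Z, hU, hZ, hLUZ⟩ := hL i
  obtain ⟨x, hxV, hxL⟩ := mem_closure_iff.1 (hVO hVne.some_mem).2 V hV hVne.some_mem
  have hVZ : V ⊆ Z := fun y hy =>
    closure_minimal (hLUZ ▸ inter_subset_right) hZ (hVO hy).2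
  refine ⟨i, V ∩ U, hV.inter hU, ⟨x, hxV, (hLUZ ▸ hxL).1⟩, fun y hy => ⟨(hVO hy.1).1, ?_⟩⟩
  rw [hLUZ]
  exact ⟨hy.2, hVZ hy.1⟩

theorem ContinuousOn.image_Ioo_of_bijOn_Icc {α δ : Type*} [ConditionallyCompleteLinearOrder α]
    [TopologicalSpace α] [OrderTopology α] [DenselyOrdered α] [LinearOrder δ]
    [TopologicalSpace δ] [OrderClosedTopology δ] {f : α → δ} {p q : α} {u v : δ} (hpq : p ≤ q)
    (hf : ContinuousOn f (Icc p q)) (hb : BijOn f (Icc p q) (Icc u v)) :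
    f '' Ioo p q = Ioo u v := by
  have huv : u ≤ v := nonempty_Icc.1 (hb.image_eq ▸ (nonempty_Icc.2 hpq).image f)
  rcases hf.strictMonoOn_of_injOn_Icc' hpq hb.injOn with hmono | hanti
  · have hends := (Icc_eq_Icc_iff huv).1 <|
      hb.image_eq.symm.trans (hf.image_Icc_of_monotoneOn hpq hmono.monotoneOn)
    rw [hf.image_Ioo_of_strictMonoOn hpq hmono, hends.1, hends.2]
  · have hends := (Icc_eq_Icc_iff huv).1 <|
      hb.image_eq.symm.trans (hf.image_Icc_of_antitoneOn hpq hanti.antitoneOn)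
    rw [hf.image_Ioo_of_strictAntiOn hpq hanti, hends.1, hends.2]

namespace MarkovMultiMap

variable (M : MarkovMultiMap)

lemma mem_A12_of_notMem_A0 {a : M.A} (ha : a ∉ M.A0) : a ∈ M.A1 ∪ M.A2 :=
  (M.A_cover a).resolve_left ha

lemma mem_A01_of_notMem_A2 {a : M.A} (ha : a ∉ M.A2) : a ∈ M.A0 ∪ M.A1 := by
  rcases M.A_cover a with h | h | h
  exacts [Or.inl h, Or.inr h, absurd h ha]

lemma isClosed_D (a : M.A) : IsClosed (M.D a) := by
  by_cases ha : a ∈ M.A0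
  · obtain ⟨p, -, q, -, -, -, hD⟩ := M.D_A0 a ha
    exact hD ▸ isClosed_Icc
  · obtain ⟨p, -, hD⟩ := M.D_A12 a (M.mem_A12_of_notMem_A0 ha)
    exact hD ▸ isClosed_singleton

lemma D_subset_Icc (a : M.A) : M.D a ⊆ Icc 0 1 :=
  M.cover ▸ subset_iUnion M.D a

lemma R_eq_Icc (a : M.A) : ∃ u ∈ M.P, ∃ v ∈ M.P, u ≤ v ∧ M.R a = Icc u v := by
  rcases M.A_cover a with ha | ha | ha
  · obtain ⟨u, hu, v, hv, huv, hR⟩ := M.R_A0 a ha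
    exact ⟨u, hu, v, hv, huv.le, hR⟩
  · obtain ⟨u, hu, v, hv, huv, hR, -⟩ := M.R_A1 a ha
    exact ⟨u, hu, v, hv, huv.le, hR⟩
  · obtain ⟨u, hu, hR⟩ := M.R_A2 a ha
    exact ⟨u, hu, u, hu, le_rfl, by rw [hR, Icc_self]⟩

lemma R_subset_Icc (a : M.A) : M.R a ⊆ Icc 0 1 := by
  obtain ⟨u, hu, v, hv, -, hR⟩ := M.R_eq_Icc a
  exact hR ▸ Icc_subset_Icc (M.P_sub hu).1 (M.P_sub hv).2

lemma D0_eq (a : M.A) :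
    (∃ p q, p < q ∧ (∀ r ∈ M.P, r ∉ Ioo p q) ∧ M.D0 a = Ioo p q) ∨ ∃ p, M.D0 a = {p} := by
  by_cases ha : a ∈ M.A0
  · obtain ⟨p, -, q, -, hpq, hP, hD⟩ := M.D_A0 a ha
    exact Or.inl ⟨p, q, hpq, hP, by rw [M.D0_A0 a ha, hD, interior_Icc]⟩
  · have ha' := M.mem_A12_of_notMem_A0 ha
    obtain ⟨p, -, hD⟩ := M.D_A12 a ha'
    exact Or.inr ⟨p, by rw [M.D0_A12 a ha', hD]⟩

lemma R0_eq (a : M.A) :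
    (∃ u ∈ M.P, ∃ v ∈ M.P, M.R0 a = Ioo u v) ∨ ∃ u ∈ M.P, M.R0 a = {u} := by
  by_cases ha : a ∈ M.A2
  · obtain ⟨u, hu, hR⟩ := M.R_A2 a ha
    exact Or.inr ⟨u, hu, by rw [M.R0_A2 a ha, hR]⟩
  · have ha' := M.mem_A01_of_notMem_A2 ha
    obtain ⟨u, hu, v, hv, -, hR⟩ := M.R_eq_Icc a
    exact Or.inl ⟨u, hu, v, hv, by rw [M.R0_A01 a ha', hR, interior_Icc]⟩

lemma D0_nonempty (a : M.A) : (M.D0 a).Nonempty := by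
  rcases M.D0_eq a with ⟨p, q, hpq, -, hD0⟩ | ⟨p, hD0⟩
  · exact hD0 ▸ nonempty_Ioo.2 hpq
  · exact hD0 ▸ singleton_nonempty p

lemma D0_subset_D (a : M.A) : M.D0 a ⊆ M.D a := by
  by_cases ha : a ∈ M.A0
  · exact M.D0_A0 a ha ▸ interior_subset
  · exact (M.D0_A12 a (M.mem_A12_of_notMem_A0 ha)).le

lemma R0_subset_R (a : M.A) : M.R0 a ⊆ M.R a := by
  by_cases ha : a ∈ M.A2
  · exact (M.R0_A2 a ha).le
  · have ha' := M.mem_A01_of_notMem_A2 ha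
    exact M.R0_A01 a ha' ▸ interior_subset

/-- The Markov property: since no point of `P` lies inside `D₀(b)`, an interior domain
either misses the interior range `R₀(a)` or is contained in it. -/
lemma D0_subset_R0_of_mem {a b : M.A} {t : ℝ} (hta : t ∈ M.R0 a) (htb : t ∈ M.D0 b) :
    M.D0 b ⊆ M.R0 a := by
  rcases M.D0_eq b with ⟨p, q, -, hP, hD0⟩ | ⟨p, hD0⟩
  · rw [hD0] at htb ⊢
    rcases M.R0_eq a with ⟨u, hu, v, hv, hR0⟩ | ⟨u, hu, hR0⟩
    · rw [hR0] at hta ⊢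
      have hup : u ≤ p := not_lt.1 fun h => hP u hu ⟨h, hta.1.trans htb.2⟩
      have hqv : q ≤ v := not_lt.1 fun h => hP v hv ⟨htb.1.trans hta.2, h⟩
      exact Ioo_subset_Ioo hup hqv
    · rw [hR0, mem_singleton_iff] at hta
      exact absurd (hta ▸ htb) (hP u hu)
  · rw [hD0] at htb ⊢
    exact singleton_subset_iff.2 (htb ▸ hta)

lemma f_image_D0 {a : M.A} (ha : a ∈ M.A0) : M.f a '' M.D0 a = M.R0 a := by
  obtain ⟨p, -, q, -, hpq, -, hD⟩ := M.D_A0 a ha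
  obtain ⟨u, -, v, -, -, hR⟩ := M.R_A0 a ha
  obtain ⟨hc, hb⟩ := M.f_homeo a ha
  rw [hD] at hc hb
  rw [hR] at hb
  rw [M.D0_A0 a ha, M.R0_A01 a (Or.inl ha), hD, hR, interior_Icc, interior_Icc]
  exact hc.image_Ioo_of_bijOn_Icc hpq.le hb

lemma G0_subset_D0_prod_R0 (a : M.A) : M.G0 a ⊆ M.D0 a ×ˢ M.R0 a := by
  rintro ⟨s, t⟩ hst
  rcases M.A_cover a with ha | ha | ha
  · rw [M.G0_A0 a ha] at hst
    exact ⟨hst.1, M.f_image_D0 ha ▸ ⟨s, hst.1, hst.2.symm⟩⟩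
  · rw [M.G0_A1 a ha, ← M.D0_A12 a (Or.inl ha)] at hst
    exact hst
  · rw [M.G0_A2 a ha, M.Gr_A12 a (Or.inr ha), ← M.D0_A12 a (Or.inr ha),
      ← M.R0_A2 a ha] at hst
    exact hst

lemma exists_mem_G0_of_mem_R0 {a : M.A} {t : ℝ} (ht : t ∈ M.R0 a) : ∃ s, (s, t) ∈ M.G0 a := by
  by_cases ha : a ∈ M.A0
  · obtain ⟨s, hs, rfl⟩ := M.f_image_D0 ha ▸ ht
    exact ⟨s, M.G0_A0 a ha ▸ ⟨hs, rfl⟩⟩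
  · have ha' := M.mem_A12_of_notMem_A0 ha
    obtain ⟨p, -, hD⟩ := M.D_A12 a ha'
    refine ⟨p, ?_⟩
    rcases ha' with ha' | ha'
    · rw [M.G0_A1 a ha', hD]
      exact ⟨rfl, ht⟩
    · rw [M.G0_A2 a ha', M.Gr_A12 a (Or.inr ha'), hD]
      exact ⟨rfl, M.R0_A2 a ha' ▸ ht⟩

lemma G0_subset_Gr (a : M.A) : M.G0 a ⊆ M.Gr a := by
  rcases M.A_cover a with ha | ha | ha
  · rw [M.G0_A0 a ha, M.Gr_A0 a ha]
    exact fun st hst => ⟨M.D0_subset_D a hst.1, hst.2⟩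
  · rw [M.G0_A1 a ha, M.Gr_A12 a (Or.inl ha)]
    exact prod_mono_right (M.R0_subset_R a)
  · rw [M.G0_A2 a ha]

lemma G0_subset_GF (a : M.A) : M.G0 a ⊆ M.GF :=
  (M.G0_subset_Gr a).trans (subset_iUnion M.Gr a)

lemma exists_mem_Gr_of_mem_D {a : M.A} {s : ℝ} (hs : s ∈ M.D a) :
    ∃ t ∈ M.R a, (s, t) ∈ M.Gr a := by
  by_cases ha : a ∈ M.A0
  · exact ⟨M.f a s, (M.f_homeo a ha).2.mapsTo hs, M.Gr_A0 a ha ▸ ⟨hs, rfl⟩⟩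
  · obtain ⟨u, -, v, -, huv, hR⟩ := M.R_eq_Icc a
    exact ⟨u, hR ▸ left_mem_Icc.2 huv,
      M.Gr_A12 a (M.mem_A12_of_notMem_A0 ha) ▸ ⟨hs, hR ▸ left_mem_Icc.2 huv⟩⟩

lemma isClosed_Gr (a : M.A) : IsClosed (M.Gr a) := by
  by_cases ha : a ∈ M.A0
  · have hgraph : M.Gr a = (M.D a ×ˢ univ) ∩ (fun st => (st.2, M.f a st.1)) ⁻¹' diagonal ℝ := by
      ext ⟨s, t⟩
      simp [M.Gr_A0 a ha]
    rw [hgraph]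
    refine ContinuousOn.preimage_isClosed_of_isClosed ?_
      ((M.isClosed_D a).prod isClosed_univ) isClosed_diagonal
    exact continuous_snd.continuousOn.prodMk
      ((M.f_homeo a ha).1.comp continuous_fst.continuousOn fun st hst => hst.1)
  · rw [M.Gr_A12 a (M.mem_A12_of_notMem_A0 ha)]
    obtain ⟨u, -, v, -, -, hR⟩ := M.R_eq_Icc a
    exact (M.isClosed_D a).prod (hR ▸ isClosed_Icc)

/-- `G₀(a)` is `G(a)` with its endpoints removed, hence closed in an open set. -/
lemma isLocallyClosed_G0 (a : M.A) : IsLocallyClosed (M.G0 a) := by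
  rcases M.A_cover a with ha | ha | ha
  · have hG0 : M.G0 a = Prod.fst ⁻¹' M.D0 a ∩ M.Gr a := by
      ext ⟨s, t⟩
      simp only [M.G0_A0 a ha, M.Gr_A0 a ha, mem_inter_iff, mem_preimage, mem_ofPred_eq]
      exact ⟨fun h => ⟨h.1, M.D0_subset_D a h.1, h.2⟩, fun h => ⟨h.1, h.2.2⟩⟩
    rw [hG0]
    exact ((M.D0_A0 a ha ▸ isOpen_interior).preimage continuous_fst).isLocallyClosed.inter
      (M.isClosed_Gr a).isLocallyClosed
  · rw [M.G0_A1 a ha, Set.prod_eq]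
    exact ((M.isClosed_D a).preimage continuous_fst).isLocallyClosed.inter
      ((M.R0_A01 a (Or.inr ha) ▸ isOpen_interior).preimage continuous_snd).isLocallyClosed
  · exact M.G0_A2 a ha ▸ (M.isClosed_Gr a).isLocallyClosed

lemma exists_mem_GF_of_mem_Icc {s : ℝ} (hs : s ∈ Icc 0 1) : ∃ t ∈ Icc 0 1, (s, t) ∈ M.GF := by
  obtain ⟨a, ha⟩ := mem_iUnion.1 (M.cover ▸ hs)
  obtain ⟨t, ht, hst⟩ := M.exists_mem_Gr_of_mem_D ha
  exact ⟨t, M.R_subset_Icc a ht, subset_iUnion M.Gr a hst⟩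

lemma exists_mem_X_apply_zero {s : ℝ} (hs : s ∈ Icc 0 1) : ∃ x ∈ M.X, x 0 = s := by
  have hsucc : ∀ y : Icc (0 : ℝ) 1, ∃ t : Icc (0 : ℝ) 1, (y.1, t.1) ∈ M.GF := fun y =>
    let ⟨t, ht, hyt⟩ := M.exists_mem_GF_of_mem_Icc y.2
    ⟨⟨t, ht⟩, hyt⟩
  choose σ hσ using hsucc
  refine ⟨fun k => (σ^[k] ⟨s, hs⟩).1, ⟨fun k => (σ^[k] ⟨s, hs⟩).2, fun k => ?_⟩, rfl⟩
  simpa only [Function.iterate_succ_apply'] using hσ (σ^[k] ⟨s, hs⟩)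

lemma exists_mem_X_forall_mem_G0 {z : ℕ → M.A} (hz : z ∈ M.SFT) (n : ℕ) :
    ∃ x ∈ M.X, x 0 ∈ M.D0 (z 0) ∧ ∀ i < n, (x i, x (i + 1)) ∈ M.G0 (z i) := by
  induction n generalizing z with
  | zero =>
    obtain ⟨s, hs⟩ := M.D0_nonempty (z 0)
    obtain ⟨x, hx, rfl⟩ := M.exists_mem_X_apply_zero (M.D_subset_Icc _ (M.D0_subset_D _ hs))
    exact ⟨x, hx, hs, fun i hi => absurd hi i.not_lt_zero⟩
  | succ n ih =>
    obtain ⟨x, hx, hx0, hxz⟩ := ih (z := fun i => z (i + 1)) fun i => hz (i + 1)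
    obtain ⟨s, hs⟩ := M.exists_mem_G0_of_mem_R0 (hz 0 hx0)
    have hsD0 := (M.G0_subset_D0_prod_R0 _ hs).1
    refine ⟨fun | 0 => s | i + 1 => x i,
      ⟨fun | 0 => ?_ | i + 1 => hx.1 i, fun | 0 => ?_ | i + 1 => hx.2 i⟩,
      hsD0, fun | 0, _ => hs | i + 1, hi => hxz i (by omega)⟩
    · exact M.D_subset_Icc _ (M.D0_subset_D _ hsD0)
    · exact M.G0_subset_GF _ hs

lemma exists_mem_X_of_mem_Lang {n : ℕ} {u : Fin n → M.A} (hu : u ∈ M.Lang n) :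
    ∃ x ∈ M.X, ∀ i : Fin n, (x i, x (i + 1)) ∈ M.G0 (u i) := by
  obtain ⟨z, hz, m, hzu⟩ := hu
  obtain ⟨x, hx, -, hxz⟩ := M.exists_mem_X_forall_mem_G0 (z := fun i => z (m + i))
    (fun i => hz (m + i)) n
  exact ⟨x, hx, fun i => hzu i ▸ hxz i i.2⟩

lemma continuous_shift : Continuous M.shift := by
  apply Continuous.subtype_mk
  exact continuous_pi fun k => (continuous_apply (k + 1)).comp continuous_subtype_val

lemma shift_iterate_apply (x : M.X) (n k : ℕ) : (M.shift^[n] x).1 k = x.1 (n + k) := by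
  induction n generalizing x with
  | zero => simp
  | succ n ih =>
    rw [Function.iterate_succ_apply, ih]
    exact congrArg x.1 (by omega)

def stableSymbols : Set M.A :=
  {c | ∃ O : Set M.X, IsOpen O ∧ O.Nonempty ∧ ∃ k, ∀ y ∈ O, (y.1 k, y.1 (k + 1)) ∈ M.G0 c}

lemma ess_subset_stableSymbols : M.Ess ⊆ M.stableSymbols := by
  rintro a ⟨n, u, ⟨hu, hopen⟩, i, rfl⟩
  let ρ : M.X → M.finTraj (n + 1) := fun x =>
    ⟨fun i => x.1 i, fun i => x.2.1 i, fun i _ => x.2.2 i⟩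
  have hρ : Continuous ρ := by
    apply Continuous.subtype_mk
    exact continuous_pi fun i => (continuous_apply _).comp continuous_subtype_val
  obtain ⟨x, hx, hxu⟩ := M.exists_mem_X_of_mem_Lang hu
  exact ⟨ρ ⁻¹' {w | M.SpecialLabeled w.1 u}, hopen.preimage hρ, ⟨⟨x, hx⟩, fun j => hxu j⟩,
    i, fun y hy => hy i⟩

namespace ProperlyParametrized

variable {M}

lemma eq_of_mem_G0 (hpp : M.ProperlyParametrized) {a b : M.A} {st : ℝ × ℝ}
    (ha : st ∈ M.G0 a) (hb : st ∈ M.G0 b) : a = b :=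
  by_contra fun hab => disjoint_left.1 (hpp.2 a b hab) ha hb

lemma exists_mem_G0 (hpp : M.ProperlyParametrized) {st : ℝ × ℝ} (h : st ∈ M.GF) :
    ∃ a, st ∈ M.G0 a :=
  mem_iUnion.1 (hpp.1 ▸ h)

lemma exists_itinerary (hpp : M.ProperlyParametrized) {x : ℕ → ℝ} (hx : x ∈ M.X) :
    ∃ z ∈ M.SFT, ∀ j, (x j, x (j + 1)) ∈ M.G0 (z j) := by
  choose z hz using fun j => hpp.exists_mem_G0 (hx.2 j)
  refine ⟨z, fun j => ?_, hz⟩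
  exact M.D0_subset_R0_of_mem (M.G0_subset_D0_prod_R0 _ (hz j)).2
    (M.G0_subset_D0_prod_R0 _ (hz (j + 1))).1

lemma exists_open_subset_forall_mem_G0 (hpp : M.ProperlyParametrized) {O : Set M.X}
    (hO : IsOpen O) (hne : O.Nonempty) (j : ℕ) :
    ∃ a, ∃ V, IsOpen V ∧ V.Nonempty ∧ V ⊆ O ∧ ∀ y ∈ V, (y.1 j, y.1 (j + 1)) ∈ M.G0 a := by
  have := M.finA
  have hπ : Continuous fun y : M.X => (y.1 j, y.1 (j + 1)) :=
    ((continuous_apply j).comp continuous_subtype_val).prodMk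
      ((continuous_apply (j + 1)).comp continuous_subtype_val)
  obtain ⟨a, V, hV, hVne, hVO⟩ := hO.exists_open_subset_of_subset_iUnion_isLocallyClosed
    (fun a => (M.isLocallyClosed_G0 a).preimage hπ)
    hne fun y _ => mem_iUnion.2 (hpp.exists_mem_G0 (y.2.2 j))
  exact ⟨a, V, hV, hVne, fun y hy => (hVO hy).1, fun y hy => (hVO hy).2⟩

lemma exists_open_subset_forall_lt_mem_G0 (hpp : M.ProperlyParametrized) {O : Set M.X}
    (hO : IsOpen O) (hne : O.Nonempty) (n : ℕ) :
    ∃ V, IsOpen V ∧ V.Nonempty ∧ V ⊆ O ∧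
      ∃ u : ℕ → M.A, ∀ j < n, ∀ y ∈ V, (y.1 j, y.1 (j + 1)) ∈ M.G0 (u j) := by
  induction n with
  | zero =>
    obtain ⟨a, -⟩ := hpp.exists_mem_G0 (hne.some.2.2 0)
    exact ⟨O, hO, hne, subset_rfl, fun _ => a, by simp⟩
  | succ n ih =>
    obtain ⟨V, hV, hVne, hVO, u, hu⟩ := ih
    obtain ⟨a, W, hW, hWne, hWV, ha⟩ := hpp.exists_open_subset_forall_mem_G0 hV hVne n
    refine ⟨W, hW, hWne, hWV.trans hVO, Function.update u n a, fun j hj y hy => ?_⟩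
    rcases Nat.lt_succ_iff_lt_or_eq.1 hj with hj | rfl
    · rw [Function.update_of_ne hj.ne]
      exact hu j hj y (hWV hy)
    · rw [Function.update_self]
      exact ha y hy

/-- Mixing of `X` makes `T^m O ∩ O'` nonempty; on an open subset of it the first `k + n + 1`
transitions have fixed labels, and these spell a word from `c` to `c'` over stable symbols. -/
lemma eventually_wordFromTo_stableSymbols (hpp : M.ProperlyParametrized)
    (hmix : TopMixing M.shift) {c c' : M.A} (hc : c ∈ M.stableSymbols)
    (hc' : c' ∈ M.stableSymbols) : ∀ᶠ n in atTop, M.WordFromTo M.stableSymbols c c' n := by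
  obtain ⟨O, hO, hOne, k, hk⟩ := hc
  obtain ⟨O', hO', hO'ne, k', hk'⟩ := hc'
  obtain ⟨N, hN⟩ := hmix O O' hO hO' hOne hO'ne
  filter_upwards [eventually_ge_atTop (N + k')] with n hn
  set m := k + n - k'
  obtain ⟨-, ⟨y₀, hy₀, rfl⟩, hy₀'⟩ := hN m (by omega)
  obtain ⟨V, hV, ⟨y, hy⟩, hVO, u, hu⟩ := hpp.exists_open_subset_forall_lt_mem_G0
    (hO.inter (hO'.preimage (M.continuous_shift.iterate m))) ⟨y₀, hy₀, hy₀'⟩ (k + n + 1)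
  obtain ⟨z, hz, hzy⟩ := hpp.exists_itinerary y.2
  have hzu : ∀ j < k + n + 1, z j = u j := fun j hj => hpp.eq_of_mem_G0 (hzy j) (hu j hj y hy)
  refine ⟨fun i => z (k + i), ⟨⟨z, hz, k, fun i => rfl⟩, fun i => ?_⟩, ?_, ?_⟩
  · show z (k + i) ∈ _
    rw [hzu _ (by omega)]
    exact ⟨V, hV, ⟨y, hy⟩, k + i, hu _ (by omega)⟩
  · exact hpp.eq_of_mem_G0 (hzy k) (hk y (hVO hy).1)
  · have hy' := hk' _ (hVO hy).2
    rw [M.shift_iterate_apply, M.shift_iterate_apply, ← add_assoc,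
      show m + k' = k + n by omega] at hy'
    exact hpp.eq_of_mem_G0 (hzy _) hy'

lemma mixingSet_stableSymbols (hpp : M.ProperlyParametrized) (hmix : TopMixing M.shift) :
    M.MixingSet M.stableSymbols := by
  have := M.finA
  have hfin : M.stableSymbols.Finite := Set.toFinite _
  have hall : ∀ᶠ n in atTop, ∀ c ∈ M.stableSymbols, ∀ c' ∈ M.stableSymbols,
      M.WordFromTo M.stableSymbols c c' n :=
    (eventually_all_finite hfin).2 fun c hc => (eventually_all_finite hfin).2 fun c' hc' =>
      hpp.eventually_wordFromTo_stableSymbols hmix hc hc'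
  obtain ⟨N, hN⟩ := eventually_atTop.1 hall
  exact ⟨N + 1, by omega, fun a ha b hb n hn => hN n (by omega) a ha b hb⟩

end ProperlyParametrized

lemma MixingSet.exists_mixingComponent_superset {M : MarkovMultiMap} {C : Set M.A}
    (hC : M.MixingSet C) : ∃ C', M.MixingComponent C' ∧ C ⊆ C' := by
  have := M.finA
  obtain ⟨C', hCC', hmax⟩ := Finite.exists_le_maximal (p := M.MixingSet) hC
  exact ⟨C', ⟨hmax.1, fun D hD hC'D => le_antisymm (hmax.2 hD hC'D) hC'D⟩, hCC'⟩

end MarkovMultiMap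

/-- If the forward trajectory system `(X,T)` of a properly parametrized Markov
multi-map is topologically mixing, then `Σ_M` satisfies the Mixing Condition (MC). -/
theorem stmt2 (M : MarkovMultiMap) (hpp : M.ProperlyParametrized)
    (hmix : TopMixing M.shift) : M.MC := by
  obtain ⟨C, hC, hSC⟩ := (hpp.mixingSet_stableSymbols hmix).exists_mixingComponent_superset
  exact ⟨C, hC, M.ess_subset_stableSymbols.trans hSC⟩
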